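/- Let d be a positive integer and let G : ℝ^d × ℝ^d → ℂ be smooth, ℤ^d-periodic in its first variable, and compactly supported in its second variable (there exists R > 0 with G(z,η) = 0 whenever |η| ≥ R). For ξ ∈ ℝ^d set G_ξ(z,η) := G(z, η+ξ), K_{G_ξ}(x,y) := ∫_{ℝ^d} e^{2πi η·(x−y)} G_ξ((x+y)/2, η) dη, and K̂_ξ(x,y) := ∑_{β ∈ ℤ^d} K_{G_ξ}(x, y+β). Then for every γ ∈ ℤ^d and all x, y ∈ ℝ^d one has K̂_{ξ+γ}(x,y) = e^{−2πi γ·(x−y)} K̂_ξ(x,y). -/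
import Mathlib


open MeasureTheory

/-- `e(s) = exp(2πis)`. -/
noncomputable def ee (s : ℝ) : ℂ := Complex.exp (2 * Real.pi * Complex.I * s)

/-- The Weyl kernel `K_G(x,y) = ∫ e^{2πi η·(x-y)} G((x+y)/2, η) dη`. -/
noncomputable def weylKernel (d : ℕ) (G : ((Fin d → ℝ) × (Fin d → ℝ)) → ℂ)
    (x y : Fin d → ℝ) : ℂ :=
  ∫ η : Fin d → ℝ, ee (∑ j, η j * (x j - y j)) * G ((2:ℝ)⁻¹ • (x + y), η)

/-- The periodized Weyl kernel of the momentum-shifted symbol `G_ξ(z,η) = G(z, η+ξ)`: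
`K̂_ξ(x,y) = ∑_{β∈ℤ^d} K_{G_ξ}(x, y+β)`. -/
noncomputable def periodizedKernel (d : ℕ) (G : ((Fin d → ℝ) × (Fin d → ℝ)) → ℂ)
    (ξ : Fin d → ℝ) (x y : Fin d → ℝ) : ℂ :=
  ∑' β : Fin d → ℤ,
    weylKernel d (fun q : (Fin d → ℝ) × (Fin d → ℝ) => G (q.1, q.2 + ξ)) x
      (y + fun i => (β i : ℝ))

lemma ee_add (a b : ℝ) : ee (a + b) = ee a * ee b := by
  simp only [ee, Complex.ofReal_add, mul_add, Complex.exp_add]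

lemma ee_int (n : ℤ) : ee (n : ℝ) = 1 := by
  have : (2 : ℂ) * Real.pi * Complex.I * (n : ℝ) = (n : ℤ) * (2 * Real.pi * Complex.I) := by
    push_cast; ring
  rw [ee, this, Complex.exp_int_mul_two_pi_mul_I]

/-- Shifting the momentum variable of the symbol by `c` multiplies the Weyl kernel by
the character `e(-c·(x-y))`. -/
lemma weyl_shift (d : ℕ) (G : ((Fin d → ℝ) × (Fin d → ℝ)) → ℂ)
    (ξ c : Fin d → ℝ) (x y : Fin d → ℝ) :
    weylKernel d (fun q : (Fin d → ℝ) × (Fin d → ℝ) => G (q.1, q.2 + (ξ + c))) x y =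
      ee (-(∑ j, c j * (x j - y j))) *
        weylKernel d (fun q : (Fin d → ℝ) × (Fin d → ℝ) => G (q.1, q.2 + ξ)) x y := by
  unfold weylKernel
  have key := MeasureTheory.integral_add_right_eq_self
    (μ := (volume : Measure (Fin d → ℝ)))
    (f := fun η : Fin d → ℝ =>
      ee ((∑ j, η j * (x j - y j)) + -(∑ j, c j * (x j - y j))) *
        G ((2:ℝ)⁻¹ • (x + y), η + ξ)) c
  calc
    (∫ η : Fin d → ℝ, ee (∑ j, η j * (x j - y j)) * G ((2:ℝ)⁻¹ • (x + y), η + (ξ + c)))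
        = ∫ η : Fin d → ℝ,
            ee ((∑ j, (η + c) j * (x j - y j)) + -(∑ j, c j * (x j - y j))) *
              G ((2:ℝ)⁻¹ • (x + y), (η + c) + ξ) := by
          congr 1
          funext η
          congr 2
          · simp only [Pi.add_apply]
            rw [← Finset.sum_neg_distrib, ← Finset.sum_add_distrib]
            exact Finset.sum_congr rfl (fun j _ => by ring)
          · congr 1
            rw [add_comm ξ c, ← add_assoc]
    _ = ∫ η : Fin d → ℝ,
            ee ((∑ j, η j * (x j - y j)) + -(∑ j, c j * (x j - y j))) *
              G ((2:ℝ)⁻¹ • (x + y), η + ξ) := key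
    _ = ee (-(∑ j, c j * (x j - y j))) *
          ∫ η : Fin d → ℝ, ee (∑ j, η j * (x j - y j)) * G ((2:ℝ)⁻¹ • (x + y), η + ξ) := by
          rw [← MeasureTheory.integral_const_mul]
          congr 1; funext η
          rw [ee_add]; ring

/-- the periodized Weyl kernels of the fibres at `ξ` and at `ξ + γ` (for `γ` in
the dual lattice) are conjugate by the character: `K̂_{ξ+γ}(x,y) = e^{-2πiγ·(x-y)} K̂_ξ(x,y)`. -/
theorem statement13 (d : ℕ) (hd : 0 < d)
    (G : ((Fin d → ℝ) × (Fin d → ℝ)) → ℂ) (hG : ContDiff ℝ (⊤ : ℕ∞) G)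
    (hper : ∀ (z η : Fin d → ℝ) (γ : Fin d → ℤ), G (z + fun i => (γ i : ℝ), η) = G (z, η))
    (hsupp : ∃ R : ℝ, 0 < R ∧ ∀ z η : Fin d → ℝ,
      R ≤ Real.sqrt (∑ j, η j ^ 2) → G (z, η) = 0)
    (ξ : Fin d → ℝ) (γ : Fin d → ℤ) (x y : Fin d → ℝ) :
    periodizedKernel d G (ξ + fun i => (γ i : ℝ)) x y =
      ee (-(∑ j, (γ j : ℝ) * (x j - y j))) * periodizedKernel d G ξ x y := by
  set γc : Fin d → ℝ := fun i => (γ i : ℝ) with hγc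
  unfold periodizedKernel
  rw [← tsum_mul_left]
  congr 1
  funext β
  set βc : Fin d → ℝ := fun i => (β i : ℝ) with hβc
  rw [weyl_shift d G ξ γc x (y + βc)]
  congr 1
  have h1 : -(∑ j, γc j * (x j - (y + βc) j))
      = -(∑ j, γc j * (x j - y j)) + ((∑ j, γ j * β j : ℤ) : ℝ) := by
    have h0 : ∀ j, γc j * (x j - (y + βc) j) = γc j * (x j - y j) + -(γc j * βc j) := by
      intro j; simp only [Pi.add_apply]; ring
    rw [Finset.sum_congr rfl (fun j _ => h0 j), Finset.sum_add_distrib, neg_add,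
      Finset.sum_neg_distrib, neg_neg]
    push_cast [γc, βc]
    rfl
  rw [h1, ee_add, ee_int, mul_one]
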